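/- arXiv:math/0512582 — 4 statements merged into one kernel-verified Lean document; each statement's English description precedes it below -/
import Mathlib

section
/- Let N be an H-normal operator on ℂⁿ (i.e., N N^[*] = N^[*] N where N^[*] = H⁻¹N*H, H invertible Hermitian) and suppose N has a single eigenvalue λ. If the subspace S₀ = {x : (N − λI)x = 0 and (N^[*] − λ̄ I)x = 0} is one-dimensional, then N is indecomposable: there is no nondegenerate proper nonzero subspace V with NV ⊆ V and N^[*]V ⊆ V. -/
open Matrix

lemma mem_ker_iff_aux {n : ℕ} (M : Matrix (Fin n) (Fin n) ℂ) (μ : ℂ) (x : Fin n → ℂ) :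
    x ∈ LinearMap.ker (Matrix.toLin' (M - μ • 1)) ↔ M.mulVec x = μ • x := by
  rw [LinearMap.mem_ker, Matrix.toLin'_apply, Matrix.sub_mulVec, Matrix.smul_mulVec,
    Matrix.one_mulVec, sub_eq_zero]

/-- Any nonzero invariant subspace contains an eigenvector, whose eigenvalue
kills the determinant. -/
lemma aux_eigen {n : ℕ} (M : Matrix (Fin n) (Fin n) ℂ) (W : Submodule ℂ (Fin n → ℂ))
    (hW : W ≠ ⊥) (hWi : ∀ x ∈ W, M.mulVec x ∈ W) :
    ∃ μ : ℂ, (M - μ • 1).det = 0 ∧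
      LinearMap.ker (Matrix.toLin' (M - μ • 1)) ⊓ W ≠ ⊥ := by
  have hWi' : ∀ x ∈ W, Matrix.toLin' M x ∈ W := by
    simpa [Matrix.toLin'_apply] using hWi
  haveI : Nontrivial W := Submodule.nontrivial_iff_ne_bot.mpr hW
  obtain ⟨μ, hμ⟩ := Module.End.exists_eigenvalue ((Matrix.toLin' M).restrict hWi')
  obtain ⟨w, hw⟩ := hμ.exists_hasEigenvector
  have hwne : (w : Fin n → ℂ) ≠ 0 := by
    simpa [Submodule.coe_eq_zero] using hw.right
  have hweq : Matrix.toLin' M (w : Fin n → ℂ) = μ • (w : Fin n → ℂ) := by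
    have := congrArg (Subtype.val) hw.apply_eq_smul
    simpa [LinearMap.restrict_apply] using this
  have hker : (w : Fin n → ℂ) ∈ LinearMap.ker (Matrix.toLin' (M - μ • 1)) := by
    rw [mem_ker_iff_aux]
    rw [Matrix.toLin'_apply] at hweq
    exact hweq
  refine ⟨μ, ?_, ?_⟩
  · refine Matrix.exists_mulVec_eq_zero_iff.mp ⟨w, hwne, ?_⟩
    have := (mem_ker_iff_aux M μ (w : Fin n → ℂ)).mp hker
    rw [Matrix.sub_mulVec, Matrix.smul_mulVec, Matrix.one_mulVec, this, sub_self]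
  · exact (Submodule.ne_bot_iff _).mpr ⟨w, Submodule.mem_inf.mpr ⟨hker, w.2⟩, hwne⟩

/-- det (N - μ•1) = 0 forces μ ∈ spectrum. -/
lemma det_eig {n : ℕ} (N : Matrix (Fin n) (Fin n) ℂ) (lam μ : ℂ)
    (hspec : spectrum ℂ N = {lam}) (h : (N - μ • 1).det = 0) : μ = lam := by
  have hmem : μ ∈ spectrum ℂ N := by
    rw [spectrum.mem_iff]
    intro hu
    rw [Algebra.algebraMap_eq_smul_one, Matrix.isUnit_iff_isUnit_det] at hu
    have e : (μ • 1 - N) = -(N - μ • (1 : Matrix (Fin n) (Fin n) ℂ)) := by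
      rw [neg_sub]
    rw [e, Matrix.det_neg, h, mul_zero] at hu
    exact hu.ne_zero rfl
  rw [hspec] at hmem
  exact hmem

/-- An H-normal operator with a single eigenvalue `λ` such that
`S₀ = ker(N - λI) ⊓ ker(N^[*] - λ̄I)` is one-dimensional is indecomposable. -/
theorem stmt4 (n : ℕ) (H N : Matrix (Fin n) (Fin n) ℂ)
    (hH : H.IsHermitian) (hinv : IsUnit H.det)
    (Nadj : Matrix (Fin n) (Fin n) ℂ) (hNadj : Nadj = H⁻¹ * Nᴴ * H)
    (hnormal : N * Nadj = Nadj * N)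
    (lam : ℂ) (hspec : spectrum ℂ N = {lam})
    (hS0 : Module.finrank ℂ
        ↥(LinearMap.ker (Matrix.toLin' (N - lam • 1)) ⊓
          LinearMap.ker (Matrix.toLin' (Nadj - (starRingEnd ℂ lam) • 1))) = 1) :
    ¬ ∃ V : Submodule ℂ (Fin n → ℂ), V ≠ ⊥ ∧ V ≠ ⊤ ∧
      (∀ x ∈ V, (∀ y ∈ V, star y ⬝ᵥ H.mulVec x = 0) → x = 0) ∧
      (∀ x ∈ V, N.mulVec x ∈ V) ∧ (∀ x ∈ V, Nadj.mulVec x ∈ V) := by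
  rintro ⟨V, hVbot, hVtop, hVnd, hVN, hVA⟩
  have hdetH : H.det ≠ 0 := hinv.ne_zero
  have hHinvH : H⁻¹ * H = 1 := Matrix.nonsing_inv_mul H hinv
  have hHHinv : H * H⁻¹ = 1 := Matrix.mul_nonsing_inv H hinv
  -- matrix identities
  have hA1 : Nadjᴴ * H = H * N := by
    rw [hNadj]
    calc (H⁻¹ * Nᴴ * H)ᴴ * H = H * N * (H⁻¹ * H) := by
          simp [Matrix.conjTranspose_mul, Matrix.conjTranspose_nonsing_inv, hH.eq,
            Matrix.mul_assoc]
      _ = H * N := by rw [hHinvH, Matrix.mul_one]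
  have hA2 : H * Nadj = Nᴴ * H := by
    rw [hNadj, ← Matrix.mul_assoc, ← Matrix.mul_assoc, hHHinv, Matrix.one_mul]
  have key : ∀ (A : Matrix (Fin n) (Fin n) ℂ) (y v : Fin n → ℂ),
      star y ⬝ᵥ Aᴴ.mulVec v = star (A.mulVec y) ⬝ᵥ v := by
    intro A y v
    rw [Matrix.star_mulVec, Matrix.dotProduct_mulVec]
  -- the H-orthogonal companion of V
  let W : Submodule ℂ (Fin n → ℂ) :=
    { carrier := {x | ∀ y ∈ V, star y ⬝ᵥ H.mulVec x = 0}
      add_mem' := by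
        intro a b ha hb y hy
        rw [Matrix.mulVec_add, dotProduct_add, ha y hy, hb y hy, add_zero]
      zero_mem' := by
        intro y hy
        rw [Matrix.mulVec_zero, dotProduct_zero]
      smul_mem' := by
        intro c a ha y hy
        rw [Matrix.mulVec_smul, dotProduct_smul, ha y hy, smul_zero] }
  have hWmem : ∀ x, x ∈ W ↔ ∀ y ∈ V, star y ⬝ᵥ H.mulVec x = 0 := fun x => Iff.rfl
  -- W is nontrivial
  have hWbot : W ≠ ⊥ := by
    have hd : Module.finrank ℂ V < n := by
      have := Submodule.finrank_lt (K := ℂ) hVtop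
      simpa [Module.finrank_fin_fun] using this
    let b := Module.finBasis ℂ V
    let Φ : (Fin n → ℂ) →ₗ[ℂ] (Fin (Module.finrank ℂ V) → ℂ) :=
      { toFun := fun x i => star ((b i : Fin n → ℂ)) ⬝ᵥ H.mulVec x
        map_add' := by
          intro a c
          funext i
          simp [Matrix.mulVec_add]
        map_smul' := by
          intro c a
          funext i
          simp [Matrix.mulVec_smul] }
    have hkerne : LinearMap.ker Φ ≠ ⊥ := by
      intro hbot
      have h1 := LinearMap.finrank_range_add_finrank_ker Φ
      rw [hbot, finrank_bot, add_zero, Module.finrank_fin_fun] at h1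
      have h2 : Module.finrank ℂ (LinearMap.range Φ) ≤ Module.finrank ℂ V := by
        simpa [Module.finrank_fin_fun] using
          (LinearMap.range Φ).finrank_le
      omega
    obtain ⟨x0, hx0, hx0ne⟩ := (Submodule.ne_bot_iff _).mp hkerne
    refine (Submodule.ne_bot_iff _).mpr ⟨x0, ?_, hx0ne⟩
    rw [hWmem]
    intro y hy
    -- expand y in the basis of V
    have hVspan : V = Submodule.span ℂ (Set.range (fun i => (b i : Fin n → ℂ))) := by
      have h1 : Submodule.span ℂ (Set.range b) = (⊤ : Submodule ℂ V) := b.span_eq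
      have h2 := congrArg (Submodule.map V.subtype) h1
      rw [Submodule.map_span, Submodule.map_subtype_top] at h2
      have h3 : ⇑V.subtype '' Set.range ⇑b
          = Set.range (fun i => (b i : Fin n → ℂ)) := by
        rw [← Set.range_comp]; rfl
      rw [h3] at h2
      exact h2.symm
    have hy' : y ∈ Submodule.span ℂ (Set.range (fun i => (b i : Fin n → ℂ))) := by
      rwa [← hVspan]
    have hx0i : ∀ i, star ((b i : Fin n → ℂ)) ⬝ᵥ H.mulVec x0 = 0 := by
      intro i
      have := LinearMap.mem_ker.mp hx0
      exact congrFun this i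
    refine Submodule.span_induction (p := fun z _ => star z ⬝ᵥ H.mulVec x0 = 0)
      ?_ ?_ ?_ ?_ hy'
    · rintro z ⟨i, rfl⟩
      exact hx0i i
    · simp
    · intro a c _ _ ha hc
      rw [star_add, add_dotProduct, ha, hc, add_zero]
    · intro a z _ hz
      rw [star_smul, smul_dotProduct, hz, smul_zero]
  -- W is invariant under N and Nadj
  have hWN : ∀ x ∈ W, N.mulVec x ∈ W := by
    intro x hx
    rw [hWmem] at hx ⊢
    intro y hy
    have : star y ⬝ᵥ H.mulVec (N.mulVec x) = star (Nadj.mulVec y) ⬝ᵥ H.mulVec x := by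
      rw [Matrix.mulVec_mulVec, ← hA1, ← Matrix.mulVec_mulVec, key]
    rw [this]
    exact hx _ (hVA y hy)
  have hWA : ∀ x ∈ W, Nadj.mulVec x ∈ W := by
    intro x hx
    rw [hWmem] at hx ⊢
    intro y hy
    have : star y ⬝ᵥ H.mulVec (Nadj.mulVec x) = star (N.mulVec y) ⬝ᵥ H.mulVec x := by
      rw [Matrix.mulVec_mulVec, hA2, ← Matrix.mulVec_mulVec, key]
    rw [this]
    exact hx _ (hVN y hy)
  -- determinant vanishing for Nadj forces eigenvalue = conj lam
  have detA : ∀ μ : ℂ, (Nadj - μ • 1).det = 0 → μ = (starRingEnd ℂ) lam := by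
    intro μ h
    have e0 : (N - (starRingEnd ℂ μ) • 1)ᴴ = Nᴴ - μ • 1 := by
      rw [Matrix.conjTranspose_sub, Matrix.conjTranspose_smul, Matrix.conjTranspose_one]
      simp
    have e1 : Nadj - μ • 1 = H⁻¹ * ((N - (starRingEnd ℂ μ) • 1)ᴴ) * H := by
      rw [e0, hNadj, Matrix.mul_sub, Matrix.sub_mul]
      congr 1
      rw [Matrix.mul_smul, Matrix.mul_one, Matrix.smul_mul, hHinvH]
    have e2 : (Nadj - μ • 1).det
        = (starRingEnd ℂ) ((N - (starRingEnd ℂ μ) • 1).det) * (H⁻¹.det * H.det) := by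
      rw [e1, Matrix.det_mul, Matrix.det_mul, Matrix.det_conjTranspose]
      have hst : (starRingEnd ℂ) ((N - (starRingEnd ℂ) μ • 1).det)
          = star ((N - (starRingEnd ℂ) μ • 1).det) := rfl
      rw [hst]
      ring
    rw [e2, Matrix.det_nonsing_inv, Ring.inverse_eq_inv', inv_mul_cancel₀ hdetH,
      mul_one] at h
    have h3 : (N - (starRingEnd ℂ μ) • 1).det = 0 := by
      have := congrArg (starRingEnd ℂ) h
      simpa using this
    have h4 := det_eig N lam ((starRingEnd ℂ) μ) hspec h3
    have := congrArg (starRingEnd ℂ) h4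
    simpa using this
  -- main step: any nonzero invariant subspace meets S₀
  set S0 := LinearMap.ker (Matrix.toLin' (N - lam • 1)) ⊓
      LinearMap.ker (Matrix.toLin' (Nadj - (starRingEnd ℂ lam) • 1)) with hS0def
  have main : ∀ U : Submodule ℂ (Fin n → ℂ), U ≠ ⊥ →
      (∀ x ∈ U, N.mulVec x ∈ U) → (∀ x ∈ U, Nadj.mulVec x ∈ U) → S0 ⊓ U ≠ ⊥ := by
    intro U hU hUN hUA
    obtain ⟨μ, hdet, hne⟩ := aux_eigen N U hU hUN
    have hμ : μ = lam := det_eig N lam μ hspec hdet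
    subst hμ
    set W1 := LinearMap.ker (Matrix.toLin' (N - μ • 1)) ⊓ U with hW1def
    have hW1A : ∀ x ∈ W1, Nadj.mulVec x ∈ W1 := by
      intro x hx
      obtain ⟨hx1, hx2⟩ := Submodule.mem_inf.mp hx
      rw [mem_ker_iff_aux] at hx1
      refine Submodule.mem_inf.mpr ⟨?_, hUA x hx2⟩
      rw [mem_ker_iff_aux]
      rw [Matrix.mulVec_mulVec, hnormal, ← Matrix.mulVec_mulVec, hx1,
        Matrix.mulVec_smul]
    obtain ⟨ν, hdet2, hne2⟩ := aux_eigen Nadj W1 hne hW1A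
    have hν : ν = (starRingEnd ℂ) μ := detA ν hdet2
    subst hν
    intro hcontra
    apply hne2
    rw [eq_bot_iff] at hcontra ⊢
    refine le_trans ?_ hcontra
    intro z hz
    obtain ⟨hz1, hz2⟩ := Submodule.mem_inf.mp hz
    obtain ⟨hz3, hz4⟩ := Submodule.mem_inf.mp hz2
    exact Submodule.mem_inf.mpr ⟨Submodule.mem_inf.mpr ⟨hz3, hz1⟩, hz4⟩
  -- S0 has dimension 1, so S0 ≤ U whenever S0 ⊓ U ≠ ⊥
  have hle : ∀ U : Submodule ℂ (Fin n → ℂ), S0 ⊓ U ≠ ⊥ → S0 ≤ U := by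
    intro U h
    have h1 : 1 ≤ Module.finrank ℂ (S0 ⊓ U : Submodule ℂ (Fin n → ℂ)) := by
      rw [Nat.one_le_iff_ne_zero]
      intro h0
      exact h (Submodule.finrank_eq_zero.mp h0)
    have heq : S0 ⊓ U = S0 :=
      Submodule.eq_of_le_of_finrank_le inf_le_left (by rw [hS0]; exact h1)
    rw [← heq]
    exact inf_le_right
  have hS0V : S0 ≤ V := hle V (main V hVbot hVN hVA)
  have hS0W : S0 ≤ W := hle W (main W hWbot hWN hWA)
  have hS0ne : S0 ≠ ⊥ := by
    intro h
    rw [h] at hS0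
    simp at hS0
  obtain ⟨s, hs, hsne⟩ := (Submodule.ne_bot_iff _).mp hS0ne
  exact hsne (hVnd s (hS0V hs) (fun y hy => (hWmem s).mp (hS0W hs) y hy))
end

section
/- Let H = [[0,I₂],[I₂,0]] (4×4) and for x ∈ ℂ let N(x) be the block diagonal matrix diag([[λ₁,1],[0,λ₁]], [[λ₂,0],[x,λ₂]]) with λ₁ ≠ λ₂. Then each N(x) is H-normal, and if T is an invertible matrix with N(x)T = T N(x̃) and T T^[*] = I (where T^[*] = H⁻¹T*H), then x̃ = x. -/
/-!
Write `T` in `2 × 2` blocks. The diagonal blocks of `N(x)` have the single eigenvalues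
`λ₁ ≠ λ₂`, so the intertwining relation `N(x) T = T N(x̃)` forces the off-diagonal blocks of `T`
to vanish (if `a - c` is nilpotent and `b - c` invertible, then `x b = a x` implies `x = 0`).
For `T = diag(A, D)` the relation `T T^[*] = I` reads `A D* = I`, so `D* = A⁻¹` commutes with
the Jordan block `[[λ₁, 1], [0, λ₁]]` as `A` does. Hence `D` is lower triangular with a repeated
nonzero diagonal entry `d`, and the `(2,1)` entry of `[[λ₂, 0], [x, λ₂]] D = D [[λ₂, 0], [x̃, λ₂]]`
reads `x d = d x̃`.
-/

open Matrix

theorem SemiconjBy.eq_zero_of_isNilpotent_sub_of_isUnit_sub {R : Type*} [Ring R] {a b x c : R}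
    (h : SemiconjBy x b a) (hc : Commute x c) (ha : IsNilpotent (a - c)) (hb : IsUnit (b - c)) :
    x = 0 := by
  obtain ⟨k, hk⟩ := ha
  have := (h.sub_right hc).pow_right k
  rw [SemiconjBy, hk, zero_mul] at this
  exact (hb.pow k).mul_left_eq_zero.mp this

namespace Matrix

section Blocks

variable {m α : Type*} [Fintype m] [DecidableEq m]

theorem inv_fromBlocks_zero_one_one_zero [CommRing α] :
    (fromBlocks 0 1 1 0 : Matrix (m ⊕ m) (m ⊕ m) α)⁻¹ = fromBlocks 0 1 1 0 :=
  inv_eq_left_inv <| by simp [fromBlocks_multiply, ← fromBlocks_one]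

theorem fromBlocks_zero_one_one_zero_mul_conjTranspose_mul [Semiring α] [Star α]
    (A B C D : Matrix m m α) :
    fromBlocks 0 1 1 0 * (fromBlocks A B C D)ᴴ * fromBlocks 0 1 1 0 =
      fromBlocks Dᴴ Bᴴ Cᴴ Aᴴ := by
  simp [fromBlocks_conjTranspose, fromBlocks_multiply]

theorem commute_fromBlocks_of_commute_conjTranspose [CommRing α] [StarRing α]
    {A D : Matrix m m α} (h : Commute A Dᴴ) : Commute (fromBlocks A 0 0 D) (fromBlocks Dᴴ 0 0 Aᴴ) := by
  have h' : D * Aᴴ = Aᴴ * D := by simpa using congrArg conjTranspose h.eq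
  simp only [Commute, SemiconjBy, fromBlocks_multiply, zero_mul, mul_zero, add_zero, zero_add,
    h.eq, h']

end Blocks

section FinTwo

variable {R : Type*}

theorem commute_jordan_iff [CommRing R] (M : Matrix (Fin 2) (Fin 2) R) (a : R) :
    Commute M !![a, 1; 0, a] ↔ M 1 0 = 0 ∧ M 1 1 = M 0 0 := by
  simp only [Commute, SemiconjBy, ← Matrix.ext_iff, Fin.forall_fin_two, mul_apply,
    Fin.sum_univ_two]
  simp only [of_apply, cons_val', cons_val_zero, cons_val_one, empty_val', cons_val_fin_one]
  constructor
  · rintro ⟨⟨h00, h01⟩, -, -⟩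
    exact ⟨by linear_combination -h00, by linear_combination -h01⟩
  · rintro ⟨h10, h11⟩
    simp only [h10, h11]
    exact ⟨⟨by ring, by ring⟩, by ring, by ring⟩

theorem isNilpotent_upper_sub_scalar [CommRing R] (a b : R) :
    IsNilpotent (!![a, b; 0, a] - scalar (Fin 2) a) :=
  ⟨2, by ext i j; fin_cases i <;> fin_cases j <;> simp [sq, mul_apply, Fin.sum_univ_two]⟩

theorem isNilpotent_lower_sub_scalar [CommRing R] (a b : R) :
    IsNilpotent (!![a, 0; b, a] - scalar (Fin 2) a) :=
  ⟨2, by ext i j; fin_cases i <;> fin_cases j <;> simp [sq, mul_apply, Fin.sum_univ_two]⟩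

theorem isUnit_upper_sub_scalar [Field R] {a c : R} (b : R) (h : a ≠ c) :
    IsUnit (!![a, b; 0, a] - scalar (Fin 2) c) := by
  rw [isUnit_iff_isUnit_det, isUnit_iff_ne_zero]
  simp [det_fin_two, sub_ne_zero.mpr h]

theorem isUnit_lower_sub_scalar [Field R] {a c : R} (b : R) (h : a ≠ c) :
    IsUnit (!![a, 0; b, a] - scalar (Fin 2) c) := by
  rw [isUnit_iff_isUnit_det, isUnit_iff_ne_zero]
  simp [det_fin_two, sub_ne_zero.mpr h]

theorem eq_zero_of_upper_mul_eq_mul_lower [Field R] {a b c d : R} (h : a ≠ c)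
    {X : Matrix (Fin 2) (Fin 2) R}
    (hX : !![a, b; 0, a] * X = X * !![c, 0; d, c]) : X = 0 :=
  SemiconjBy.eq_zero_of_isNilpotent_sub_of_isUnit_sub hX.symm
    (scalar_commute a (Commute.all a) X).symm
    (isNilpotent_upper_sub_scalar a b) (isUnit_lower_sub_scalar d h.symm)

theorem eq_zero_of_lower_mul_eq_mul_upper [Field R] {a b c d : R} (h : a ≠ c)
    {X : Matrix (Fin 2) (Fin 2) R}
    (hX : !![c, 0; d, c] * X = X * !![a, b; 0, a]) : X = 0 :=
  SemiconjBy.eq_zero_of_isNilpotent_sub_of_isUnit_sub hX.symm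
    (scalar_commute c (Commute.all c) X).symm
    (isNilpotent_lower_sub_scalar c d) (isUnit_upper_sub_scalar b h)

theorem eq_of_lower_mul_eq_mul_lower [Field R] {c x x' : R} {D : Matrix (Fin 2) (Fin 2) R}
    (hD : IsUnit D.det) (h01 : D 0 1 = 0) (h11 : D 1 1 = D 0 0)
    (h : !![c, 0; x, c] * D = D * !![c, 0; x', c]) : x' = x := by
  rw [det_fin_two, h01, h11, zero_mul, sub_zero, isUnit_iff_ne_zero] at hD
  have h10 := congrFun (congrFun h 1) 0
  simp only [mul_apply, Fin.sum_univ_two, of_apply, cons_val', cons_val_zero, cons_val_one,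
    cons_val_fin_one, h11] at h10
  exact mul_right_cancel₀ (left_ne_zero_of_mul hD) (by linear_combination -h10)

end FinTwo

end Matrix

/-- With `H = [[0,I₂],[I₂,0]]` and `N(x) = diag([[λ₁,1],[0,λ₁]], [[λ₂,0],[x,λ₂]])`,
each `N(x)` is H-normal, and `x` is an H-unitary invariant. -/
theorem stmt9 (lam1 lam2 : ℂ) (hne : lam1 ≠ lam2)
    (H : Matrix (Fin 2 ⊕ Fin 2) (Fin 2 ⊕ Fin 2) ℂ)
    (hHdef : H = Matrix.fromBlocks 0 1 1 0)
    (Nmat : ℂ → Matrix (Fin 2 ⊕ Fin 2) (Fin 2 ⊕ Fin 2) ℂ)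
    (hNdef : ∀ x : ℂ, Nmat x =
      Matrix.fromBlocks !![lam1, 1; 0, lam1] 0 0 !![lam2, 0; x, lam2]) :
    (∀ x : ℂ, Nmat x * (H⁻¹ * (Nmat x)ᴴ * H) = (H⁻¹ * (Nmat x)ᴴ * H) * Nmat x) ∧
    (∀ (x xt : ℂ) (T : Matrix (Fin 2 ⊕ Fin 2) (Fin 2 ⊕ Fin 2) ℂ),
      IsUnit T.det → Nmat x * T = T * Nmat xt →
      T * (H⁻¹ * Tᴴ * H) = 1 → xt = x) := by
  have hH : H⁻¹ = H := hHdef ▸ inv_fromBlocks_zero_one_one_zero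
  refine ⟨fun x => ?_, fun x xt T _ hNT hTT => ?_⟩
  · have hJK : Commute (!![lam2, 0; x, lam2]ᴴ) !![lam1, 1; 0, lam1] :=
      (commute_jordan_iff _ _).mpr ⟨by simp, by simp⟩
    rw [hH, hHdef, hNdef, fromBlocks_zero_one_one_zero_mul_conjTranspose_mul, conjTranspose_zero]
    exact (commute_fromBlocks_of_commute_conjTranspose hJK.symm).eq
  · obtain ⟨A, B, C, D, rfl⟩ : ∃ A B C D, T = fromBlocks A B C D :=
      ⟨_, _, _, _, (fromBlocks_toBlocks T).symm⟩
    rw [hNdef, hNdef, fromBlocks_multiply, fromBlocks_multiply, fromBlocks_inj] at hNT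
    simp only [zero_mul, mul_zero, add_zero, zero_add] at hNT
    obtain ⟨hA, hB, hC, hD⟩ := hNT
    rw [hH, hHdef, fromBlocks_zero_one_one_zero_mul_conjTranspose_mul,
      eq_zero_of_upper_mul_eq_mul_lower hne hB, eq_zero_of_lower_mul_eq_mul_upper hne hC,
      fromBlocks_multiply, ← fromBlocks_one, fromBlocks_inj] at hTT
    have hAD : A * Dᴴ = 1 := by simpa using hTT.1
    have hDA : D * Aᴴ = 1 := by simpa using congrArg conjTranspose hAD
    have hcomm : Commute Dᴴ !![lam1, 1; 0, lam1] :=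
      Commute.units_inv_left (u := ⟨A, Dᴴ, hAD, mul_eq_one_comm.mp hAD⟩) hA.symm
    obtain ⟨h10, h11⟩ := (commute_jordan_iff _ _).mp hcomm
    simp only [conjTranspose_apply, star_eq_zero, star_inj] at h10 h11
    exact eq_of_lower_mul_eq_mul_lower (isUnit_det_of_right_inverse hDA) h10 h11 hD
end

section
/- Every invertible 2×2 complex matrix A with A A*⁻¹ diagonalizable and having two distinct eigenvalues of modulus 1 is congruent (A ↦ TAT* for invertible T) to a diagonal matrix diag(z₁, z₂) with |z₁| = |z₂| = 1. -/
/-!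
Congruence by `S` acts on the cosquare `A (A*)⁻¹` by similarity by `S`, so after congruence
by `P⁻¹` the cosquare of `B = P⁻¹ A (P⁻¹)*` is `D = diag(x₁, x₂)`, i.e. `B = D B*`. Entrywise,
`b_ij = x_i conj(b_ji) = x_i conj(x_j) b_ij`, and `x_i conj(x_j) ≠ 1` for distinct unimodular
`x_i, x_j`; hence `B` is diagonal, and a positive diagonal rescaling makes its entries unimodular.
-/

open Matrix

namespace Matrix

variable {n : Type*} [Fintype n] [DecidableEq n] {K : Type*} [Field K] [StarRing K]

/-- The matrix `A'` of the paper. -/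
noncomputable def cosquare (A : Matrix n n K) : Matrix n n K :=
  A * Aᴴ⁻¹

theorem cosquare_mul_mul_conjTranspose (A : Matrix n n K)
    {S : Matrix n n K} (hS : IsUnit S.det) :
    cosquare (S * A * Sᴴ) = S * cosquare A * S⁻¹ := by
  have hSH : Sᴴ * Sᴴ⁻¹ = 1 := mul_nonsing_inv _ (by simpa [det_conjTranspose] using hS.star)
  simp only [cosquare, conjTranspose_mul, conjTranspose_conjTranspose, Matrix.mul_inv_rev,
    Matrix.mul_assoc]
  rw [← Matrix.mul_assoc Sᴴ, hSH, Matrix.one_mul]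

theorem eq_mul_conjTranspose_of_cosquare_eq {A D : Matrix n n K} (hA : IsUnit A.det)
    (h : cosquare A = D) : A = D * Aᴴ := by
  have hAH : Aᴴ⁻¹ * Aᴴ = 1 := nonsing_inv_mul _ (by simpa [det_conjTranspose] using hA.star)
  rw [← h, cosquare, Matrix.mul_assoc, hAH, Matrix.mul_one]

theorem isDiag_of_cosquare_eq_diagonal {B : Matrix n n ℂ} (hB : IsUnit B.det) {x : n → ℂ}
    (hx : Function.Injective x) (hx_norm : ∀ i, ‖x i‖ = 1) (h : cosquare B = diagonal x) :
    B.IsDiag := by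
  have hBD := eq_mul_conjTranspose_of_cosquare_eq hB h
  have entry : ∀ i j, B i j = x i * star (B j i) := fun i j => by
    conv_lhs => rw [hBD]
    simp [diagonal_mul]
  intro i j hij
  have hne_one : x i * star (x j) ≠ 1 := by
    intro h1
    have hj : x j * star (x j) = 1 := by
      rw [Complex.star_def, Complex.mul_conj, Complex.normSq_eq_norm_sq, hx_norm]; norm_num
    exact hij (hx (by linear_combination (-x i) * hj + x j * h1))
  have hfix : (1 - x i * star (x j)) * B i j = 0 := by
    have hij' := entry i j
    rw [entry j i, star_mul', star_star] at hij'
    linear_combination hij'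
  exact (mul_eq_zero.mp hfix).resolve_left (sub_ne_zero.mpr hne_one.symm)

theorem exists_diagonal_congruence_unimodular {d : n → ℂ} (hd : ∀ i, d i ≠ 0) :
    ∃ c z : n → ℂ, (∀ i, c i ≠ 0) ∧ (∀ i, ‖z i‖ = 1) ∧
      diagonal c * diagonal d * (diagonal c)ᴴ = diagonal z := by
  refine ⟨fun i => ((‖d i‖).sqrt⁻¹ : ℝ), fun i => d i / ‖d i‖, fun i => by simpa using hd i,
    fun i => by simp [hd i], ?_⟩
  rw [diagonal_conjTranspose, diagonal_mul_diagonal, diagonal_mul_diagonal]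
  congr 1
  funext i
  have hpos : 0 < ‖d i‖ := norm_pos_iff.mpr (hd i)
  have hsq : ((‖d i‖).sqrt⁻¹ * (‖d i‖).sqrt⁻¹ : ℝ) = ‖d i‖⁻¹ := by
    rw [← mul_inv, Real.mul_self_sqrt hpos.le]
  simp only [Pi.star_apply, Complex.star_def, Complex.conj_ofReal]
  rw [mul_comm _ (d i), mul_assoc, ← Complex.ofReal_mul, hsq, Complex.ofReal_inv, div_eq_mul_inv]

theorem exists_congruence_diagonal_unimodular_of_cosquare {A : Matrix n n ℂ} (hA : IsUnit A.det)
    {P : Matrix n n ℂ} (hP : IsUnit P.det) {x : n → ℂ} (hx : Function.Injective x)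
    (hx_norm : ∀ i, ‖x i‖ = 1) (h : cosquare A = P * diagonal x * P⁻¹) :
    ∃ (T : Matrix n n ℂ) (z : n → ℂ), IsUnit T.det ∧ (∀ i, ‖z i‖ = 1) ∧
      T * A * Tᴴ = diagonal z := by
  set B := P⁻¹ * A * P⁻¹ᴴ
  have hPinv : IsUnit P⁻¹.det := isUnit_nonsing_inv_det_iff.mpr hP
  have hB : IsUnit B.det := by
    simpa [B, det_mul, det_conjTranspose] using (hPinv.mul hA).mul hPinv.star
  have hBdiag : B.IsDiag := isDiag_of_cosquare_eq_diagonal hB hx hx_norm <| by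
    rw [cosquare_mul_mul_conjTranspose A hPinv, h, nonsing_inv_nonsing_inv P hP]
    simp only [← Matrix.mul_assoc, nonsing_inv_mul P hP, Matrix.one_mul]
    rw [Matrix.mul_assoc, nonsing_inv_mul P hP, Matrix.mul_one]
  have hBeq : diagonal B.diag = B := hBdiag.diagonal_diag
  have hd : ∀ i, B.diag i ≠ 0 := fun i hi => hB.ne_zero <| by
    rw [← hBeq, det_diagonal]
    exact Finset.prod_eq_zero (Finset.mem_univ i) hi
  obtain ⟨c, z, hc, hz, hcong⟩ := exists_diagonal_congruence_unimodular hd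
  refine ⟨diagonal c * P⁻¹, z, ?_, hz, ?_⟩
  · rw [det_mul, det_diagonal]
    exact (isUnit_iff_ne_zero.mpr (Finset.prod_ne_zero_iff.mpr fun i _ => hc i)).mul hPinv
  · rw [← hcong, hBeq]
    simp only [B, conjTranspose_mul, Matrix.mul_assoc]

end Matrix

/-- An invertible 2×2 complex matrix `A` such that `A' = A (A*)⁻¹` is
diagonalizable with two distinct unimodular eigenvalues is congruent to a
diagonal matrix `diag(z₁, z₂)` with `|z₁| = |z₂| = 1`. -/
theorem stmt17 (A : Matrix (Fin 2) (Fin 2) ℂ) (hA : IsUnit A.det)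
    (x1 x2 : ℂ) (hne : x1 ≠ x2)
    (hx1 : ‖x1‖ = 1) (hx2 : ‖x2‖ = 1)
    (P : Matrix (Fin 2) (Fin 2) ℂ) (hP : IsUnit P.det)
    (hdiag : A * (Aᴴ)⁻¹ = P * !![x1, 0; 0, x2] * P⁻¹) :
    ∃ (T : Matrix (Fin 2) (Fin 2) ℂ) (z1 z2 : ℂ), IsUnit T.det ∧
      ‖z1‖ = 1 ∧ ‖z2‖ = 1 ∧
      T * A * Tᴴ = !![z1, 0; 0, z2] := by
  have hinj : Function.Injective ![x1, x2] := by
    intro i j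
    fin_cases i <;> fin_cases j <;> simp [hne, hne.symm]
  have hnorm : ∀ i, ‖![x1, x2] i‖ = 1 := by
    intro i; fin_cases i <;> simp [hx1, hx2]
  obtain ⟨T, z, hT, hz, hTA⟩ := exists_congruence_diagonal_unimodular_of_cosquare hA hP hinj hnorm
    (by rw [cosquare, hdiag, diagonal_fin_two]; rfl)
  exact ⟨T, z 0, z 1, hT, hz 0, hz 1, by rw [hTA, diagonal_fin_two]⟩
end

section
/- Let z₁, z₂ be unimodular complex numbers with arg z₁ ≤ arg z₂ (args in [0,2π)), and similarly z̃₁, z̃₂. If the diagonal matrices diag(z₁,z₂) and diag(z̃₁,z̃₂) are congruent, i.e., diag(z̃₁,z̃₂) = T diag(z₁,z₂) T* for some invertible 2×2 matrix T, then z̃₁ = z₁ and z̃₂ = z₂. -/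
/-!
Both diagonal matrices `A` and `B = T A Tᴴ` are unitary. Then `B² T = T A²` (from `Bᴴ = B⁻¹`),
so `B²` and `A²` have the same trace, and `det B = |det T|² det A` forces `det B = det A`.
Hence `z̃₁ z̃₂ = z₁ z₂` and `z̃₁² + z̃₂² = z₁² + z₂²`, so `(z̃₁, z̃₂)` is `±(z₁, z₂)` or
`±(z₂, z₁)`. The `(0,0)` entry of `T A Tᴴ` puts `z̃₁` in the cone `ℝ≥0 z₁ + ℝ≥0 z₂`, which
rules out the negated solutions unless `z₂ = -z₁` (where they coincide with the others), and
the ordering of the arguments rules out a genuine swap.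
-/

open Matrix

/-- The argument of a complex number normalized to lie in `[0, 2π)`. -/
noncomputable def arg2pi (z : ℂ) : ℝ :=
  if 0 ≤ Complex.arg z then Complex.arg z else Complex.arg z + 2 * Real.pi

lemma eq_of_arg2pi_eq {z w : ℂ} (hz : ‖z‖ = 1) (hw : ‖w‖ = 1)
    (h : arg2pi z = arg2pi w) : z = w := by
  apply Complex.ext_norm_arg (hz.trans hw.symm)
  unfold arg2pi at h
  have := Complex.arg_le_pi z
  have := Complex.neg_pi_lt_arg z
  have := Complex.arg_le_pi w
  have := Complex.neg_pi_lt_arg w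
  split_ifs at h <;> linarith [Real.pi_pos]

lemma eq_neg_of_neg_eq_smul_add_smul {E : Type*} [NormedAddCommGroup E] [NormedSpace ℝ E]
    {z w : E} (hzw : ‖z‖ = ‖w‖) {a b : ℝ} (ha : 0 ≤ a) (hb : 0 ≤ b)
    (h : -w = a • z + b • w) : z = -w := by
  have hw : (1 + b) • w = -(a • z) := by linear_combination (norm := module) -h
  have hnorm : (1 + b) * ‖w‖ = a * ‖w‖ := by
    simpa [norm_smul, abs_of_nonneg ha, abs_of_nonneg (by linarith : 0 ≤ 1 + b), hzw] using
      congrArg norm hw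
  rcases eq_or_ne ‖w‖ 0 with hw0 | hw0
  · rw [norm_eq_zero.mp hw0, neg_zero, ← norm_eq_zero, hzw, hw0]
  have hab : a = 1 + b := (mul_right_cancel₀ hw0 hnorm).symm
  rw [hab] at hw
  have : (1 + b) • (z + w) = 0 := by rw [smul_add, hw, add_neg_cancel]
  rw [eq_neg_iff_add_eq_zero]
  exact (smul_eq_zero.mp this).resolve_left (by linarith)

lemma sign_cases_of_mul_eq_of_sq_add_sq_eq {K : Type*} [Field K] [CharZero K] {x y a b : K}
    (hmul : x * y = a * b) (hsq : x ^ 2 + y ^ 2 = a ^ 2 + b ^ 2) :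
    (x = a ∧ y = b) ∨ (x = b ∧ y = a) ∨ (x = -a ∧ y = -b) ∨ (x = -b ∧ y = -a) := by
  have hsum : (x + y) ^ 2 = (a + b) ^ 2 := by linear_combination hsq + 2 * hmul
  have hdiff : (x - y) ^ 2 = (a - b) ^ 2 := by linear_combination hsq - 2 * hmul
  rcases sq_eq_sq_iff_eq_or_eq_neg.mp hsum with hs | hs <;>
    rcases sq_eq_sq_iff_eq_or_eq_neg.mp hdiff with hd | hd
  · exact .inl ⟨by linear_combination (hs + hd) / 2, by linear_combination (hs - hd) / 2⟩
  · exact .inr <| .inl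
      ⟨by linear_combination (hs + hd) / 2, by linear_combination (hs - hd) / 2⟩
  · exact .inr <| .inr <| .inr
      ⟨by linear_combination (hs + hd) / 2, by linear_combination (hs - hd) / 2⟩
  · exact .inr <| .inr <| .inl
      ⟨by linear_combination (hs + hd) / 2, by linear_combination (hs - hd) / 2⟩

namespace Matrix

variable {n : Type*} [Fintype n] [DecidableEq n]

section CommRing

variable {R : Type*} [CommRing R] [StarRing R] {A B T : Matrix n n R}

lemma mul_self_mul_eq_of_eq_mul_mul_conjTranspose (hA : A ∈ unitaryGroup n R)
    (hB : B ∈ unitaryGroup n R) (h : B = T * A * Tᴴ) : B * B * T = T * (A * A) := by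
  have hX : Tᴴ * (B * T * Aᴴ) = 1 := by
    have hBH : Bᴴ = T * Aᴴ * Tᴴ := by
      rw [h, conjTranspose_mul, conjTranspose_mul, conjTranspose_conjTranspose, mul_assoc]
    rw [mul_eq_one_comm, mul_assoc, mul_assoc, ← mul_assoc T, ← hBH, ← star_eq_conjTranspose,
      Unitary.mul_star_self_of_mem hB]
  calc B * B * T = B * (B * T * Aᴴ) * A := by
        simp only [mul_assoc, ← star_eq_conjTranspose, Unitary.star_mul_self_of_mem hA, mul_one]
    _ = T * A * (Tᴴ * (B * T * Aᴴ)) * A := by nth_rw 1 [h]; simp only [mul_assoc]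
    _ = T * (A * A) := by rw [hX, mul_one, mul_assoc]

lemma trace_mul_self_eq_of_eq_mul_mul_conjTranspose (hA : A ∈ unitaryGroup n R)
    (hB : B ∈ unitaryGroup n R) (hT : IsUnit T.det) (h : B = T * A * Tᴴ) :
    trace (B * B) = trace (A * A) := by
  rw [← trace_conj ((isUnit_iff_isUnit_det T).mpr hT) (A * A),
    ← mul_self_mul_eq_of_eq_mul_mul_conjTranspose hA hB h, mul_assoc, mul_nonsing_inv T hT,
    mul_one]

end CommRing

variable {𝕜 : Type*} [RCLike 𝕜]

lemma diagonal_mem_unitaryGroup {d : n → 𝕜} (hd : ∀ i, ‖d i‖ = 1) :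
    diagonal d ∈ unitaryGroup n 𝕜 := by
  rw [mem_unitaryGroup_iff, star_eq_conjTranspose, diagonal_conjTranspose,
    diagonal_mul_diagonal, ← diagonal_one]
  congr 1
  ext i
  simp [RCLike.mul_conj, hd i]

lemma mul_diagonal_mul_conjTranspose_apply_self (T : Matrix n n 𝕜) (d : n → 𝕜) (i : n) :
    (T * diagonal d * Tᴴ) i i = ∑ k, ((‖T i k‖ ^ 2 : ℝ) : 𝕜) * d k := by
  rw [mul_apply]
  refine Finset.sum_congr rfl fun k _ => ?_
  rw [mul_diagonal, conjTranspose_apply, RCLike.star_def, RCLike.ofReal_pow, ← RCLike.mul_conj]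
  ring

lemma det_eq_of_eq_mul_mul_conjTranspose {A B T : Matrix n n 𝕜} (hA : A ∈ unitaryGroup n 𝕜)
    (hB : B ∈ unitaryGroup n 𝕜) (h : B = T * A * Tᴴ) : B.det = A.det := by
  have hdet : B.det = ((‖T.det‖ ^ 2 : ℝ) : 𝕜) * A.det := by
    rw [h, det_mul, det_mul, det_conjTranspose, RCLike.star_def, RCLike.ofReal_pow,
      ← RCLike.mul_conj]
    ring
  have hnA : ‖A.det‖ = 1 := CStarRing.norm_of_mem_unitary (det_of_mem_unitary hA)
  have hnB : ‖B.det‖ = 1 := CStarRing.norm_of_mem_unitary (det_of_mem_unitary hB)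
  have hnT : ‖T.det‖ ^ 2 = 1 := by
    simpa [hnA, hnB, eq_comm] using congrArg norm hdet
  rw [hdet, hnT, RCLike.ofReal_one, one_mul]

end Matrix

/-- If `diag(z₁,z₂)` and `diag(z̃₁,z̃₂)` (unimodular entries, arguments in
`[0,2π)` in increasing order) are congruent via an invertible `T`,
then `z̃₁ = z₁` and `z̃₂ = z₂`. -/
theorem stmt18 (z1 z2 zt1 zt2 : ℂ)
    (h1 : ‖z1‖ = 1) (h2 : ‖z2‖ = 1)
    (ht1 : ‖zt1‖ = 1) (ht2 : ‖zt2‖ = 1)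
    (horder : arg2pi z1 ≤ arg2pi z2) (hordert : arg2pi zt1 ≤ arg2pi zt2)
    (T : Matrix (Fin 2) (Fin 2) ℂ) (hT : IsUnit T.det)
    (hcong : !![zt1, 0; 0, zt2] = T * !![z1, 0; 0, z2] * Tᴴ) :
    zt1 = z1 ∧ zt2 = z2 := by
  rw [← diagonal_vec2, ← diagonal_vec2] at hcong
  have hA := diagonal_mem_unitaryGroup (d := ![z1, z2]) (by simp [Fin.forall_fin_two, h1, h2])
  have hB := diagonal_mem_unitaryGroup (d := ![zt1, zt2]) (by simp [Fin.forall_fin_two, ht1, ht2])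
  have hmul : zt1 * zt2 = z1 * z2 := by
    simpa [Fin.prod_univ_two] using det_eq_of_eq_mul_mul_conjTranspose hA hB hcong
  have hsq : zt1 ^ 2 + zt2 ^ 2 = z1 ^ 2 + z2 ^ 2 := by
    simpa [Fin.sum_univ_two, sq] using trace_mul_self_eq_of_eq_mul_mul_conjTranspose hA hB hT hcong
  have hcone : zt1 = (‖T 0 0‖ ^ 2 : ℝ) • z1 + (‖T 0 1‖ ^ 2 : ℝ) • z2 := by
    simpa [Fin.sum_univ_two, Complex.real_smul] using
      (congrFun (congrFun hcong 0) 0).trans (mul_diagonal_mul_conjTranspose_apply_self T _ 0)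
  have hswap : arg2pi z2 ≤ arg2pi z1 → z1 = z2 := fun h ↦
    eq_of_arg2pi_eq h1 h2 (horder.antisymm h)
  rcases sign_cases_of_mul_eq_of_sq_add_sq_eq hmul hsq with
    ⟨rfl, rfl⟩ | ⟨rfl, rfl⟩ | ⟨rfl, rfl⟩ | ⟨rfl, rfl⟩
  · exact ⟨rfl, rfl⟩
  · obtain rfl := hswap hordert
    exact ⟨rfl, rfl⟩
  · obtain rfl : z2 = -z1 := eq_neg_of_neg_eq_smul_add_smul (h2.trans h1.symm) (sq_nonneg _)
      (sq_nonneg _) (by rw [hcone, add_comm])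
    rw [neg_neg] at hordert
    have hz1 : z1 = 0 := self_eq_neg.mp (hswap hordert)
    simp [hz1] at h1
  · obtain rfl : z1 = -z2 := eq_neg_of_neg_eq_smul_add_smul (h1.trans h2.symm) (sq_nonneg _)
      (sq_nonneg _) hcone
    exact ⟨rfl, neg_neg z2⟩
end
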